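/- For a polynomial p on ℝ^(m×n), tr Δ_A applied to the function U ↦ p(UN) equals (tr(N Δ_A Nᵀ) p)(UN); in particular, for a homogeneous polynomial P with P(UM) = (det M)^α P(U) and a symmetric positive definite Y ∈ ℝ^(n×n), one has (det Y)^{−α/2} · (exp(−tr Δ_A/(8π)) P)(U Y^{1/2}) = (exp(−tr(Δ_A Y^{−1})/(8π)) P)(U). -/

import Mathlib

open scoped BigOperators
open Matrix MvPolynomial

/-- The trace Laplacian `tr Δ_A` acting on polynomials on `ℝ^(m×n)`. -/
noncomputable def trLapPoly {m n : ℕ} (A : Matrix (Fin m) (Fin m) ℝ)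
    (p : MvPolynomial (Fin m × Fin n) ℝ) : MvPolynomial (Fin m × Fin n) ℝ :=
  ∑ c : Fin n, ∑ a : Fin m, ∑ b : Fin m,
    MvPolynomial.C (A⁻¹ a b) * pderiv (a, c) (pderiv (b, c) p)

/-- `exp(c · tr Δ_A)` applied to a polynomial (a finite sum). -/
noncomputable def expTrLap {m n : ℕ} (A : Matrix (Fin m) (Fin m) ℝ) (c : ℝ)
    (p : MvPolynomial (Fin m × Fin n) ℝ) : MvPolynomial (Fin m × Fin n) ℝ :=
  ∑ k ∈ Finset.range (p.totalDegree + 1),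
    (c ^ k / k.factorial : ℝ) • (trLapPoly A)^[k] p

/-- Polynomial substitution `U ↦ UN`. -/
noncomputable def subN {m n : ℕ} (N : Matrix (Fin n) (Fin n) ℝ)
    (p : MvPolynomial (Fin m × Fin n) ℝ) : MvPolynomial (Fin m × Fin n) ℝ :=
  MvPolynomial.aeval
    (fun q : Fin m × Fin n => ∑ c, MvPolynomial.C (N c q.2) * X (q.1, c)) p

/-- The operator `tr(N Δ_A Nᵀ)` acting on polynomials. -/
noncomputable def trNLapN {m n : ℕ} (A : Matrix (Fin m) (Fin m) ℝ)
    (N : Matrix (Fin n) (Fin n) ℝ)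
    (p : MvPolynomial (Fin m × Fin n) ℝ) : MvPolynomial (Fin m × Fin n) ℝ :=
  ∑ ν : Fin n, ∑ d : Fin n, ∑ e : Fin n, ∑ μ : Fin m, ∑ ρ : Fin m,
    MvPolynomial.C (N ν d * N ν e * A⁻¹ μ ρ) * pderiv (ρ, d) (pderiv (μ, e) p)

/-- The operator `tr(Δ_A Y⁻¹)` acting on polynomials. -/
noncomputable def trLapYinv {m n : ℕ} (A : Matrix (Fin m) (Fin m) ℝ)
    (Y : Matrix (Fin n) (Fin n) ℝ)
    (p : MvPolynomial (Fin m × Fin n) ℝ) : MvPolynomial (Fin m × Fin n) ℝ :=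
  ∑ ν : Fin n, ∑ ν' : Fin n, ∑ a : Fin m, ∑ b : Fin m,
    MvPolynomial.C (Y⁻¹ ν' ν * A⁻¹ a b) * pderiv (a, ν) (pderiv (b, ν') p)

/-- `exp(c · tr(Δ_A Y⁻¹))` applied to a polynomial (a finite sum). -/
noncomputable def expTrLapYinv {m n : ℕ} (A : Matrix (Fin m) (Fin m) ℝ)
    (Y : Matrix (Fin n) (Fin n) ℝ) (c : ℝ)
    (p : MvPolynomial (Fin m × Fin n) ℝ) : MvPolynomial (Fin m × Fin n) ℝ :=
  ∑ k ∈ Finset.range (p.totalDegree + 1),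
    (c ^ k / k.factorial : ℝ) • (trLapYinv A Y)^[k] p

/-!
Under the substitution `U ↦ UN` the chain rule turns each operator entry `(Δ_A)_{νν'}` into
`∑_{d,e} N_{νd} N_{ν'e} (Δ_A)_{de}`, hence `tr(Δ_A M) (p(·N)) = (tr(Δ_A NᵀMN) p)(·N)`; the first
claim is the case `M = 1`. For the second, let `S = Y^{1/2}` and `W = S⁻¹`, so that `WᵀW = Y⁻¹`.
Iterating the first claim gives `(tr Δ_A)^k (P(·W)) = ((tr(Δ_A Y⁻¹))^k P)(·W)`, while homogeneity
gives `P(·W) = (det W)^α P = (det Y)^{-α/2} P`. Summing the exponential series and evaluating at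
`U S` yields the identity.
-/

namespace MvPolynomial

variable {R σ τ : Type*} [CommSemiring R]

theorem pderiv_pderiv_comm (i j : σ) (p : MvPolynomial σ R) :
    pderiv i (pderiv j p) = pderiv j (pderiv i p) := by
  classical
  induction p using MvPolynomial.induction_on with
  | C a => simp
  | add p q hp hq => simp only [map_add, hp, hq]
  | mul_X p k h =>
    simp only [pderiv_mul, map_add, pderiv_X, h, Pi.single_apply]
    split_ifs <;> simp only [pderiv_one, map_zero, mul_zero, mul_one] <;> ring

theorem pderiv_aeval [Fintype σ] (f : σ → MvPolynomial τ R) (i : τ) (p : MvPolynomial σ R) :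
    pderiv i (aeval f p) = ∑ j, aeval f (pderiv j p) * pderiv i (f j) := by
  classical
  induction p using MvPolynomial.induction_on with
  | C a => simp
  | add p q hp hq => simp only [map_add, add_mul, Finset.sum_add_distrib, hp, hq]
  | mul_X p k h =>
    simp only [map_mul, aeval_X, pderiv_mul, h, Finset.sum_mul, map_add, add_mul,
      Finset.sum_add_distrib, pderiv_X, Pi.single_apply]
    simp [mul_right_comm]

end MvPolynomial

theorem Fintype.sum_comm₂₂ {α β γ δ M : Type*} [Fintype α] [Fintype β] [Fintype γ] [Fintype δ]
    [AddCommMonoid M] (f : α → β → γ → δ → M) :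
    ∑ a, ∑ b, ∑ c, ∑ d, f a b c d = ∑ c, ∑ d, ∑ a, ∑ b, f a b c d :=
  calc _ = ∑ x : α × β, ∑ y : γ × δ, f x.1 x.2 y.1 y.2 := by simp only [Fintype.sum_prod_type]
    _ = ∑ y : γ × δ, ∑ x : α × β, f x.1 x.2 y.1 y.2 := Finset.sum_comm
    _ = _ := by simp only [Fintype.sum_prod_type]

theorem Real.rpow_neg_natCast_div_two {x : ℝ} (hx : 0 ≤ x) (α : ℕ) :
    x ^ (-(α : ℝ) / 2) = (√x)⁻¹ ^ α := by
  rw [Real.sqrt_eq_rpow, ← Real.rpow_neg hx, ← Real.rpow_natCast, ← Real.rpow_mul hx]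
  ring_nf

open scoped MatrixOrder in
theorem Matrix.PosSemidef.sqrt_eq_eigenvectorUnitary_conj {ι : Type*} [Fintype ι] [DecidableEq ι]
    {Y : Matrix ι ι ℝ} (hY : Y.PosSemidef) :
    CFC.sqrt Y = hY.1.eigenvectorUnitary.1 * diagonal (fun i => √(hY.1.eigenvalues i)) *
      (star hY.1.eigenvectorUnitary : Matrix ι ι ℝ) := by
  rw [CFC.sqrt_eq_cfc, cfc_nnreal_eq_real _ Y, hY.1.cfc_eq]
  simp [IsHermitian.cfc, Function.comp_def, hY.eigenvalues_nonneg]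

variable {m n : ℕ}

section Substitution

variable (N : Matrix (Fin n) (Fin n) ℝ)

theorem subN_C_mul (r : ℝ) (p : MvPolynomial (Fin m × Fin n) ℝ) :
    subN N (C r * p) = C r * subN N p := by
  simp [subN]

theorem subN_sum {ι : Type*} (s : Finset ι) (p : ι → MvPolynomial (Fin m × Fin n) ℝ) :
    subN N (∑ i ∈ s, p i) = ∑ i ∈ s, subN N (p i) :=
  map_sum _ _ _

theorem subN_smul (r : ℝ) (p : MvPolynomial (Fin m × Fin n) ℝ) :
    subN N (r • p) = r • subN N p :=
  map_smul _ _ _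

theorem eval_subN (x : Fin m × Fin n → ℝ) (p : MvPolynomial (Fin m × Fin n) ℝ) :
    eval x (subN N p) = eval (fun q => ∑ c, x (q.1, c) * N c q.2) p := by
  rw [subN, ← aeval_eq_eval, aeval_eq_bind₁, aeval_bind₁]
  simp [mul_comm]

theorem pderiv_subN (a : Fin m) (c : Fin n) (p : MvPolynomial (Fin m × Fin n) ℝ) :
    pderiv (a, c) (subN N p) = ∑ e, C (N c e) * subN N (pderiv (a, e) p) := by
  rw [subN, pderiv_aeval, Fintype.sum_prod_type]
  simp only [map_sum, pderiv_C_mul, pderiv_X, Pi.single_apply, Prod.mk.injEq, mul_ite, mul_one,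
    mul_zero, ite_and, Finset.sum_ite_eq', Finset.mem_univ, if_true, Finset.sum_ite_irrel,
    Finset.sum_const_zero]
  simp only [subN, mul_comm]

theorem subN_eq_C_det_pow_mul {α : ℕ} {P : MvPolynomial (Fin m × Fin n) ℝ}
    (hhom : ∀ (U : Fin m → Fin n → ℝ) (M : Matrix (Fin n) (Fin n) ℝ),
      MvPolynomial.eval (fun q => ∑ c, U q.1 c * M c q.2) P =
        M.det ^ α * MvPolynomial.eval (fun q => U q.1 q.2) P)
    (M : Matrix (Fin n) (Fin n) ℝ) :
    subN M P = C (M.det ^ α) * P := by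
  refine MvPolynomial.funext fun x => ?_
  rw [eval_subN, eval_mul, eval_C]
  exact hhom (fun i c => x (i, c)) M

theorem eval_mul_subN_of_mul_eq_one {S W : Matrix (Fin n) (Fin n) ℝ} (hSW : S * W = 1)
    (U : Fin m → Fin n → ℝ) (p : MvPolynomial (Fin m × Fin n) ℝ) :
    eval (fun q => ∑ c, U q.1 c * S c q.2) (subN W p) = eval (fun q => U q.1 q.2) p := by
  rw [eval_subN]
  congr 2 with q
  change (of U * S * W) q.1 q.2 = U q.1 q.2
  rw [Matrix.mul_assoc, hSW, Matrix.mul_one, of_apply]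

end Substitution

section Operators

/-- The entry `(Δ_A)_{νν'}` of the matrix of operators `Δ_A`. -/
noncomputable def lapEntry (A : Matrix (Fin m) (Fin m) ℝ) (ν ν' : Fin n)
    (p : MvPolynomial (Fin m × Fin n) ℝ) : MvPolynomial (Fin m × Fin n) ℝ :=
  ∑ a, ∑ b, C (A⁻¹ a b) * pderiv (a, ν) (pderiv (b, ν') p)

/-- The operator `tr(Δ_A M)`. -/
noncomputable def trLapMul (A : Matrix (Fin m) (Fin m) ℝ) (M : Matrix (Fin n) (Fin n) ℝ)
    (p : MvPolynomial (Fin m × Fin n) ℝ) : MvPolynomial (Fin m × Fin n) ℝ :=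
  ∑ ν, ∑ ν', C (M ν' ν) * lapEntry A ν ν' p

variable (A : Matrix (Fin m) (Fin m) ℝ)

theorem trLapPoly_eq_trLapMul_one : trLapPoly A = trLapMul (n := n) A 1 := by
  funext p
  simp [trLapPoly, trLapMul, lapEntry, Matrix.one_apply]

theorem trLapYinv_eq_trLapMul (Y : Matrix (Fin n) (Fin n) ℝ) :
    trLapYinv A Y = trLapMul A Y⁻¹ := by
  funext p
  simp only [trLapYinv, trLapMul, lapEntry, Finset.mul_sum, C_mul, mul_assoc]

theorem trNLapN_eq_trLapMul (N : Matrix (Fin n) (Fin n) ℝ) :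
    trNLapN A N = trLapMul A (Nᵀ * N) := by
  funext p
  have inner (ν d e : Fin n) :
      ∑ μ, ∑ ρ, C (N ν d * N ν e * A⁻¹ μ ρ) * pderiv (ρ, d) (pderiv (μ, e) p) =
        C (N ν d * N ν e) * lapEntry A e d p := by
    simp only [lapEntry, Finset.mul_sum, C_mul, mul_assoc, pderiv_pderiv_comm (_, d)]
  simp only [trNLapN, trLapMul, inner, Finset.sum_comm_cycle (s := Finset.univ (α := Fin n)),
    ← Finset.sum_mul, ← map_sum, Matrix.mul_apply, Matrix.transpose_apply]
  exact Finset.sum_comm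

theorem lapEntry_subN (N : Matrix (Fin n) (Fin n) ℝ) (ν ν' : Fin n)
    (p : MvPolynomial (Fin m × Fin n) ℝ) :
    lapEntry A ν ν' (subN N p) = ∑ d, ∑ e, C (N ν d * N ν' e) * subN N (lapEntry A d e p) := by
  simp only [lapEntry, pderiv_subN, map_sum, pderiv_C_mul, Finset.mul_sum, subN_sum, subN_C_mul]
  rw [Fintype.sum_comm₂₂, Finset.sum_comm]
  refine Fintype.sum_congr _ _ fun d => Fintype.sum_congr _ _ fun e =>
    Fintype.sum_congr _ _ fun a => Fintype.sum_congr _ _ fun b => ?_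
  rw [C_mul]
  ring

theorem trLapMul_subN (M N : Matrix (Fin n) (Fin n) ℝ) (p : MvPolynomial (Fin m × Fin n) ℝ) :
    trLapMul A M (subN N p) = subN N (trLapMul A (Nᵀ * M * N) p) := by
  simp only [trLapMul, lapEntry_subN, Finset.mul_sum, subN_sum, subN_C_mul]
  rw [Fintype.sum_comm₂₂]
  simp only [Matrix.mul_apply, transpose_apply, map_sum, Finset.sum_mul]
  refine Fintype.sum_congr _ _ fun d => Fintype.sum_congr _ _ fun e =>
    Fintype.sum_congr _ _ fun ν => Fintype.sum_congr _ _ fun ν' => ?_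
  rw [C_mul, C_mul, C_mul]
  ring

theorem trLapPoly_subN (N : Matrix (Fin n) (Fin n) ℝ) (p : MvPolynomial (Fin m × Fin n) ℝ) :
    trLapPoly A (subN N p) = subN N (trNLapN A N p) := by
  rw [trLapPoly_eq_trLapMul_one, trLapMul_subN, trNLapN_eq_trLapMul, Matrix.mul_one]

theorem iterate_trLapPoly_subN (N : Matrix (Fin n) (Fin n) ℝ) (k : ℕ)
    (p : MvPolynomial (Fin m × Fin n) ℝ) :
    (trLapPoly A)^[k] (subN N p) = subN N ((trNLapN A N)^[k] p) :=
  (Function.Semiconj.iterate_right (fun p => (trLapPoly_subN A N p).symm) k p).symm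

theorem trLapPoly_C_mul (r : ℝ) (p : MvPolynomial (Fin m × Fin n) ℝ) :
    trLapPoly A (C r * p) = C r * trLapPoly A p := by
  simp only [trLapPoly, pderiv_C_mul, Finset.mul_sum, mul_left_comm]

theorem iterate_trLapPoly_C_mul (r : ℝ) (k : ℕ) (p : MvPolynomial (Fin m × Fin n) ℝ) :
    (trLapPoly A)^[k] (C r * p) = C r * (trLapPoly A)^[k] p :=
  (Function.Commute.iterate_right (fun p => (trLapPoly_C_mul A r p).symm) k p).symm

theorem C_mul_expTrLap_eq_subN_expTrLapYinv {W Y : Matrix (Fin n) (Fin n) ℝ} (t c : ℝ)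
    {P : MvPolynomial (Fin m × Fin n) ℝ} (hW : Wᵀ * W = Y⁻¹) (hP : subN W P = C c * P) :
    C c * expTrLap A t P = subN W (expTrLapYinv A Y t P) := by
  have iterate_eq (k : ℕ) : C c * (trLapPoly A)^[k] P = subN W ((trLapYinv A Y)^[k] P) := by
    rw [trLapYinv_eq_trLapMul, ← hW, ← trNLapN_eq_trLapMul, ← iterate_trLapPoly_subN, hP,
      iterate_trLapPoly_C_mul]
  simp only [expTrLap, expTrLapYinv, Finset.mul_sum, mul_smul_comm, subN_sum, subN_smul,
    iterate_eq]

end Operators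

theorem stmt12_general {m n : ℕ} (A : Matrix (Fin m) (Fin m) ℝ) (p : MvPolynomial (Fin m × Fin n) ℝ)
    (N : Matrix (Fin n) (Fin n) ℝ) (α : ℕ) (P : MvPolynomial (Fin m × Fin n) ℝ)
    (hhom : ∀ (U : Fin m → Fin n → ℝ) (M : Matrix (Fin n) (Fin n) ℝ),
      MvPolynomial.eval (fun q => ∑ c, U q.1 c * M c q.2) P =
        M.det ^ α * MvPolynomial.eval (fun q => U q.1 q.2) P)
    (Y : Matrix (Fin n) (Fin n) ℝ) (hY : Y.PosDef) :
    trLapPoly A (subN N p) = subN N (trNLapN A N p) ∧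
    ∀ U : Fin m → Fin n → ℝ,
      Y.det ^ (-(α : ℝ) / 2) *
          MvPolynomial.eval
            (fun q => ∑ c, U q.1 c * (hY.1.eigenvectorUnitary.1 *
              diagonal (fun i => √(hY.1.eigenvalues i)) *
              (star hY.1.eigenvectorUnitary : Matrix (Fin n) (Fin n) ℝ)) c q.2)
            (expTrLap A (-(8 * Real.pi)⁻¹) P) =
        MvPolynomial.eval (fun q => U q.1 q.2)
          (expTrLapYinv A Y (-(8 * Real.pi)⁻¹) P) := by
  refine ⟨trLapPoly_subN A N p, fun U => ?_⟩
  open scoped MatrixOrder in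
  rw [← hY.posSemidef.sqrt_eq_eigenvectorUnitary_conj]
  set S := CFC.sqrt Y
  have hS : S.PosSemidef := (CFC.sqrt_nonneg Y).posSemidef
  have hdetS : S.det = √Y.det := by simp [S, hY.posSemidef.det_sqrt]
  have hSW : S * S⁻¹ = 1 :=
    S.mul_nonsing_inv (hdetS ▸ (Real.sqrt_pos.2 hY.det_pos).ne'.isUnit)
  have hW : (S⁻¹)ᵀ * S⁻¹ = Y⁻¹ := by
    rw [transpose_nonsing_inv, ← conjTranspose_eq_transpose_of_trivial, hS.1, ← Matrix.mul_inv_rev,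
      CFC.sqrt_mul_sqrt_self Y hY.posSemidef.nonneg]
  have hprefactor : Y.det ^ (-(α : ℝ) / 2) = S⁻¹.det ^ α := by
    rw [Real.rpow_neg_natCast_div_two hY.det_pos.le, det_nonsing_inv, hdetS, Ring.inverse_eq_inv']
  rw [hprefactor, ← eval_mul_subN_of_mul_eq_one hSW, ← eval_C (S⁻¹.det ^ α), ← eval_mul,
    C_mul_expTrLap_eq_subN_expTrLapYinv A _ _ hW (subN_eq_C_det_pow_mul hhom _)]

/-- `tr Δ_A (p(UN)) = (tr(N Δ_A Nᵀ) p)(UN)` for polynomials `p`;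
and for a homogeneous polynomial `P` of determinant-degree `α` and a symmetric
positive definite `Y`, `(det Y)^{−α/2} (exp(−tr Δ_A/(8π)) P)(U Y^{1/2}) =
(exp(−tr(Δ_A Y⁻¹)/(8π)) P)(U)`. -/
theorem stmt12 {m n : ℕ} (A : Matrix (Fin m) (Fin m) ℝ) (hAs : Aᵀ = A)
    (hA : IsUnit A.det) (p : MvPolynomial (Fin m × Fin n) ℝ)
    (N : Matrix (Fin n) (Fin n) ℝ) (α : ℕ) (P : MvPolynomial (Fin m × Fin n) ℝ)
    (hhom : ∀ (U : Fin m → Fin n → ℝ) (M : Matrix (Fin n) (Fin n) ℝ),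
      MvPolynomial.eval (fun q => ∑ c, U q.1 c * M c q.2) P =
        M.det ^ α * MvPolynomial.eval (fun q => U q.1 q.2) P)
    (Y : Matrix (Fin n) (Fin n) ℝ) (hY : Y.PosDef) :
    trLapPoly A (subN N p) = subN N (trNLapN A N p) ∧
    ∀ U : Fin m → Fin n → ℝ,
      Y.det ^ (-(α : ℝ) / 2) *
          MvPolynomial.eval
            (fun q => ∑ c, U q.1 c * (hY.1.eigenvectorUnitary.1 *
              diagonal (fun i => √(hY.1.eigenvalues i)) *
              (star hY.1.eigenvectorUnitary : Matrix (Fin n) (Fin n) ℝ)) c q.2)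
            (expTrLap A (-(8 * Real.pi)⁻¹) P) =
        MvPolynomial.eval (fun q => U q.1 q.2)
          (expTrLapYinv A Y (-(8 * Real.pi)⁻¹) P) :=
  stmt12_general A p N α P hhom Y hY
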